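/- Consider the aRB-IRG algorithm under the following assumptions: each X_i is nonempty, closed, and convex; the set X = X_1 × ⋯ × X_d is bounded with ‖x‖ ≤ M for all x ∈ X; f is convex with ‖∇̃f(x)‖ ≤ C_f for all x ∈ X; F is continuous and monotone on X with ‖F(x)‖ ≤ C_F for all x ∈ X; the problem min{f(x) : x ∈ SOL(X,F)} has an optimal solution x*; and the sequences (γ_k) and (η_k) are strictly positive and nonincreasing. Then for any N ≥ 1, the averaged iterate satisfies E[f(x̄_N)] − f(x*) ≤ (4M² γ_N^{r−1}/η_N + Σ_{k=0}^{N} η_k^{-1} γ_k^{r+1}(C_F² + η_k² C_f²)) / (p_min Σ_{k=0}^{N} γ_k^r). -/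

import Mathlib

/-!
The block-weighted distance `D z = ∑ i, (p i)⁻¹ * ‖z i - x* i‖ ^ 2` is a Lyapunov function:
averaged over the block that is drawn, one aRB-IRG step is a full projected step measured in `D`,
so nonexpansiveness of the projections, monotonicity of `F`, `x* ∈ SOL(X, F)` and the
subgradient inequality give
`E D(x_{k+1}) ≤ E D(x_k) - 2 γ_k η_k (E f(x_k) - f(x*)) + 2 γ_k² (C_F² + η_k² C_f²)`.
Multiplying by `γ_k^(r-1) / (2 η_k)`, which is nondecreasing in `k`, and summing by parts with
`0 ≤ D ≤ 4 M² / p_min` bounds `∑ γ_k^r (E f(x_k) - f(x*))`; Jensen's inequality for `f` then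
passes to the averaged iterate. Since `x_k` is a deterministic function of the first `k` drawn
blocks, every expectation is a finite sum over block histories weighted by products of the `p i`.
-/

open scoped RealInnerProductSpace
open MeasureTheory ProbabilityTheory

abbrev BlockSpace (d : ℕ) (n : Fin d → ℕ) :=
  PiLp 2 (fun i : Fin d => EuclideanSpace ℝ (Fin (n i)))

def VISol {d : ℕ} {n : Fin d → ℕ} (X : Set (BlockSpace d n))
    (F : BlockSpace d n → BlockSpace d n) : Set (BlockSpace d n) :=
  {x | x ∈ X ∧ ∀ y ∈ X, 0 ≤ ⟪F x, y - x⟫}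

open Finset

theorem Convex.sq_norm_sub_le_of_forall_norm_sub_le {E : Type*} [NormedAddCommGroup E]
    [InnerProductSpace ℝ E] {K : Set E} (hK : Convex ℝ K) {z q w : E} (hq : q ∈ K)
    (hnear : ∀ v ∈ K, ‖z - q‖ ≤ ‖z - v‖) (hw : w ∈ K) :
    ‖q - w‖ ^ 2 ≤ ‖z - w‖ ^ 2 := by
  have : Nonempty K := ⟨⟨q, hq⟩⟩
  have hinf : ‖z - q‖ = ⨅ v : K, ‖z - v‖ :=
    le_antisymm (le_ciInf fun v => hnear v v.2)
      (ciInf_le (f := fun v : K => ‖z - v‖) ⟨0, by rintro _ ⟨v, rfl⟩; exact norm_nonneg _⟩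
        ⟨q, hq⟩)
  have hobtuse : ⟪z - q, w - q⟫ ≤ 0 :=
    (norm_eq_iInf_iff_real_inner_le_zero hK hq).mp hinf w hw
  have hsplit : z - w = (z - q) - (w - q) := by abel
  have hqw : q - w = -(w - q) := by abel
  rw [hsplit, norm_sub_sq_real (z - q), hqw, norm_neg]
  nlinarith [sq_nonneg ‖z - q‖]

section Regularized

variable {E : Type*} [NormedAddCommGroup E] [InnerProductSpace ℝ E]

theorem mul_sub_le_inner_add_smul {F g : E → E} {f : E → ℝ} {y z : E} {η : ℝ} (hη : 0 ≤ η)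
    (hmono : 0 ≤ ⟪F z - F y, z - y⟫) (hsol : 0 ≤ ⟪F y, z - y⟫)
    (hsub : f z + ⟪g z, y - z⟫ ≤ f y) :
    η * (f z - f y) ≤ ⟪F z + η • g z, z - y⟫ := by
  have hyz : y - z = -(z - y) := by abel
  rw [hyz, inner_neg_right] at hsub
  rw [inner_sub_left] at hmono
  rw [inner_add_left, real_inner_smul_left]
  nlinarith

theorem sq_norm_add_smul_le {a b : E} {A B η : ℝ} (ha : ‖a‖ ≤ A) (hb : ‖b‖ ≤ B) (hη : 0 ≤ η) :
    ‖a + η • b‖ ^ 2 ≤ 2 * (A ^ 2 + η ^ 2 * B ^ 2) := by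
  have hnorm : ‖a + η • b‖ ≤ A + η * B := by
    calc ‖a + η • b‖ ≤ ‖a‖ + ‖η • b‖ := norm_add_le _ _
      _ = ‖a‖ + η * ‖b‖ := by rw [norm_smul, Real.norm_of_nonneg hη]
      _ ≤ A + η * B := by gcongr
  calc ‖a + η • b‖ ^ 2 ≤ (A + η * B) ^ 2 := pow_le_pow_left₀ (norm_nonneg _) hnorm 2
    _ ≤ 2 * (A ^ 2 + η ^ 2 * B ^ 2) := by nlinarith [add_sq_le (a := A) (b := η * B)]

end Regularized

section WeightedSqDist

variable {ι : Type*} [Fintype ι] {E : ι → Type*} [∀ i, NormedAddCommGroup (E i)]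

noncomputable def weightedSqDist (p : ι → ℝ) (z y : PiLp 2 E) : ℝ :=
  ∑ i, (p i)⁻¹ * ‖z i - y i‖ ^ 2

theorem weightedSqDist_nonneg {p : ι → ℝ} (hp : ∀ i, 0 ≤ p i) (z y : PiLp 2 E) :
    0 ≤ weightedSqDist p z y :=
  sum_nonneg fun i _ => mul_nonneg (inv_nonneg.2 (hp i)) (sq_nonneg _)

theorem weightedSqDist_le_of_norm_le {p : ι → ℝ} {c M : ℝ} (hc : 0 < c) (hcp : ∀ i, c ≤ p i)
    {z y : PiLp 2 E} (hz : ‖z‖ ≤ M) (hy : ‖y‖ ≤ M) : weightedSqDist p z y ≤ 4 * M ^ 2 / c := by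
  have hzy : ‖z - y‖ ≤ 2 * M := (norm_sub_le z y).trans (by linarith)
  calc weightedSqDist p z y ≤ c⁻¹ * ∑ i, ‖z i - y i‖ ^ 2 := by
        rw [mul_sum]
        exact sum_le_sum fun i _ =>
          mul_le_mul_of_nonneg_right (inv_anti₀ hc (hcp i)) (sq_nonneg _)
    _ = ‖z - y‖ ^ 2 / c := by rw [PiLp.norm_sq_eq_of_L2, div_eq_inv_mul]; rfl
    _ ≤ (2 * M) ^ 2 / c := by gcongr
    _ = 4 * M ^ 2 / c := by ring

theorem weightedSqDist_update [DecidableEq ι] (p : ι → ℝ) (z y : PiLp 2 E) (i : ι) (v : E i) :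
    weightedSqDist p (WithLp.toLp 2 (Function.update z i v)) y
      = weightedSqDist p z y + (p i)⁻¹ * (‖v - y i‖ ^ 2 - ‖z i - y i‖ ^ 2) := by
  simp only [weightedSqDist]
  rw [← sum_erase_add _ _ (mem_univ i), ← sum_erase_add _ _ (mem_univ i),
    sum_congr rfl fun j hj => by rw [Function.update_of_ne (ne_of_mem_erase hj)]]
  simp only [Function.update_self]
  ring

end WeightedSqDist

section BlockProjStep

variable {ι : Type*} [DecidableEq ι] {E : ι → Type*} [∀ i, NormedAddCommGroup (E i)]
  [∀ i, InnerProductSpace ℝ (E i)]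

noncomputable def blockProjStep (P : ∀ i, E i → E i) (γ : ℝ) (w z : PiLp 2 E) (i : ι) :
    PiLp 2 E :=
  WithLp.toLp 2 (Function.update z i (P i (z i - γ • w i)))

theorem blockProjStep_mem {K : ∀ i, Set (E i)} {P : ∀ i, E i → E i} (hP : ∀ i v, P i v ∈ K i)
    (γ : ℝ) (w : PiLp 2 E) {z : PiLp 2 E} (hz : ∀ j, z j ∈ K j) (i j : ι) :
    blockProjStep P γ w z i j ∈ K j := by
  rcases eq_or_ne j i with rfl | hji
  · simp [blockProjStep, hP]
  · simpa [blockProjStep, Function.update_of_ne hji] using hz j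

theorem sum_mul_weightedSqDist_blockProjStep_le [Fintype ι] {K : ∀ i, Set (E i)}
    (hK : ∀ i, Convex ℝ (K i))
    {P : ∀ i, E i → E i} (hP : ∀ i v, P i v ∈ K i ∧ ∀ u ∈ K i, ‖v - P i v‖ ≤ ‖v - u‖)
    {p : ι → ℝ} (hp : ∀ i, 0 < p i) (hpsum : ∑ i, p i = 1)
    (γ : ℝ) (w z : PiLp 2 E) {y : PiLp 2 E} (hy : ∀ i, y i ∈ K i) :
    ∑ i, p i * weightedSqDist p (blockProjStep P γ w z i) y
      ≤ weightedSqDist p z y - 2 * γ * ⟪w, z - y⟫ + γ ^ 2 * ‖w‖ ^ 2 := by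
  have hblock : ∀ i, ‖P i (z i - γ • w i) - y i‖ ^ 2
      ≤ ‖z i - y i‖ ^ 2 - 2 * γ * ⟪w i, z i - y i⟫ + γ ^ 2 * ‖w i‖ ^ 2 := fun i => by
    calc ‖P i (z i - γ • w i) - y i‖ ^ 2 ≤ ‖z i - γ • w i - y i‖ ^ 2 :=
          (hK i).sq_norm_sub_le_of_forall_norm_sub_le (hP i _).1 (hP i _).2 (hy i)
      _ = _ := by
          rw [sub_right_comm, norm_sub_sq_real, real_inner_smul_right, norm_smul,
            Real.norm_eq_abs, mul_pow, sq_abs, real_inner_comm]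
          ring
  have hterm : ∀ i, p i * weightedSqDist p (blockProjStep P γ w z i) y
      = p i * weightedSqDist p z y + (‖P i (z i - γ • w i) - y i‖ ^ 2 - ‖z i - y i‖ ^ 2) :=
    fun i => by
      rw [blockProjStep, weightedSqDist_update, mul_add, ← mul_assoc,
        mul_inv_cancel₀ (hp i).ne', one_mul]
  calc ∑ i, p i * weightedSqDist p (blockProjStep P γ w z i) y
      = weightedSqDist p z y + ∑ i, (‖P i (z i - γ • w i) - y i‖ ^ 2 - ‖z i - y i‖ ^ 2) := by
        rw [sum_congr rfl fun i _ => hterm i, sum_add_distrib, ← sum_mul, hpsum, one_mul]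
    _ ≤ weightedSqDist p z y + ∑ i, (-(2 * γ) * ⟪w i, z i - y i⟫ + γ ^ 2 * ‖w i‖ ^ 2) := by
        gcongr with i; linarith [hblock i]
    _ = weightedSqDist p z y - 2 * γ * ⟪w, z - y⟫ + γ ^ 2 * ‖w‖ ^ 2 := by
        rw [sum_add_distrib, ← mul_sum, ← mul_sum, PiLp.norm_sq_eq_of_L2, PiLp.inner_apply]
        simp only [PiLp.sub_apply]
        ring

theorem eq_blockProjStep {P : ∀ i, E i → E i} {γ : ℝ} {w z z' : PiLp 2 E} {i : ι}
    (hi : z' i = P i (z i - γ • w i)) (hj : ∀ j, j ≠ i → z' j = z j) :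
    z' = blockProjStep P γ w z i := by
  refine PiLp.ext fun j => ?_
  rcases eq_or_ne j i with rfl | hji
  · simp [blockProjStep, hi]
  · simp [blockProjStep, Function.update_of_ne hji, hj j hji]

theorem sum_mul_weightedSqDist_regularized_blockProjStep_le [Fintype ι] {K : ∀ i, Set (E i)}
    (hK : ∀ i, Convex ℝ (K i))
    {P : ∀ i, E i → E i} (hP : ∀ i v, P i v ∈ K i ∧ ∀ u ∈ K i, ‖v - P i v‖ ≤ ‖v - u‖)
    {p : ι → ℝ} (hp : ∀ i, 0 < p i) (hpsum : ∑ i, p i = 1)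
    {F g : PiLp 2 E → PiLp 2 E} {f : PiLp 2 E → ℝ} {y z : PiLp 2 E} (hy : ∀ i, y i ∈ K i)
    {γ η CF Cf : ℝ} (hγ : 0 ≤ γ) (hη : 0 ≤ η)
    (hmono : 0 ≤ ⟪F z - F y, z - y⟫) (hsol : 0 ≤ ⟪F y, z - y⟫)
    (hsub : f z + ⟪g z, y - z⟫ ≤ f y) (hF : ‖F z‖ ≤ CF) (hg : ‖g z‖ ≤ Cf) :
    ∑ i, p i * weightedSqDist p (blockProjStep P γ (F z + η • g z) z i) y
      ≤ weightedSqDist p z y - 2 * γ * η * (f z - f y)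
        + 2 * γ ^ 2 * (CF ^ 2 + η ^ 2 * Cf ^ 2) := by
  have hstep := sum_mul_weightedSqDist_blockProjStep_le hK hP hp hpsum γ (F z + η • g z) z hy
  have hinner := mul_le_mul_of_nonneg_left (mul_sub_le_inner_add_smul hη hmono hsol hsub)
    (by positivity : 0 ≤ 2 * γ)
  have hnorm := mul_le_mul_of_nonneg_left (sq_norm_add_smul_le hF hg hη) (sq_nonneg γ)
  linarith

end BlockProjStep

section DrivenPath

variable {α Z : Type*}

def drivenPath (x₀ : Z) (T : ℕ → Z → α → Z) : (k : ℕ) → (Fin k → α) → Z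
  | 0, _ => x₀
  | k + 1, a => T k (drivenPath x₀ T k (Fin.init a)) (a (Fin.last k))

theorem drivenPath_mem {S : Set Z} {x₀ : Z} (hx₀ : x₀ ∈ S) {T : ℕ → Z → α → Z}
    (hT : ∀ k z i, z ∈ S → T k z i ∈ S) : ∀ k a, drivenPath x₀ T k a ∈ S
  | 0, _ => hx₀
  | k + 1, a => hT k _ _ (drivenPath_mem hx₀ hT k (Fin.init a))

theorem eq_drivenPath {Ω : Type*} {x : ℕ → Ω → Z} {x₀ : Z} {T : ℕ → Z → α → Z}
    {ι : ℕ → Ω → α} (hx₀ : ∀ ω, x 0 ω = x₀) (hx : ∀ k ω, x (k + 1) ω = T k (x k ω) (ι k ω))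
    (ω : Ω) : ∀ k, x k ω = drivenPath x₀ T k fun j => ι j ω
  | 0 => hx₀ ω
  | k + 1 => by rw [hx, eq_drivenPath hx₀ hx ω k]; rfl

end DrivenPath

section IidExpect

variable {α : Type*} [Fintype α]

noncomputable def iidExpect (p : α → ℝ) (m : ℕ) (H : (Fin m → α) → ℝ) : ℝ :=
  ∑ a, (∏ j, p (a j)) * H a

variable {p : α → ℝ}

theorem iidExpect_succ (m : ℕ) (H : (Fin (m + 1) → α) → ℝ) :
    iidExpect p (m + 1) H = iidExpect p m fun b => ∑ i, p i * H (Fin.snoc b i) := by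
  simp only [iidExpect, mul_sum]
  rw [← (Fin.snocEquiv fun _ => α).sum_comp, Fintype.sum_prod_type, sum_comm]
  refine sum_congr rfl fun b _ => sum_congr rfl fun i _ => ?_
  change (∏ j, p (Fin.snoc (α := fun _ => α) b i j)) * H (Fin.snoc b i) = _
  simp only [Fin.prod_univ_castSucc, Fin.snoc_castSucc, Fin.snoc_last]
  ring

theorem iidExpect_mono (hp : ∀ i, 0 ≤ p i) {m : ℕ} {H G : (Fin m → α) → ℝ}
    (h : ∀ a, H a ≤ G a) : iidExpect p m H ≤ iidExpect p m G :=
  sum_le_sum fun a _ => mul_le_mul_of_nonneg_left (h a) (prod_nonneg fun _ _ => hp _)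

theorem iidExpect_const (hp : ∑ i, p i = 1) (m : ℕ) (c : ℝ) :
    iidExpect p m (fun _ => c) = c := by
  induction m with
  | zero => simp [iidExpect]
  | succ m ih => simpa [iidExpect_succ, ← sum_mul, hp] using ih

theorem iidExpect_le_of_le (hp0 : ∀ i, 0 ≤ p i) (hp : ∑ i, p i = 1) {m : ℕ}
    {H : (Fin m → α) → ℝ} {c : ℝ} (h : ∀ a, H a ≤ c) : iidExpect p m H ≤ c :=
  (iidExpect_mono hp0 h).trans (iidExpect_const hp m c).le

theorem le_iidExpect_of_le (hp0 : ∀ i, 0 ≤ p i) (hp : ∑ i, p i = 1) {m : ℕ}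
    {H : (Fin m → α) → ℝ} {c : ℝ} (h : ∀ a, c ≤ H a) : c ≤ iidExpect p m H :=
  (iidExpect_const hp m c).symm.le.trans (iidExpect_mono hp0 h)

theorem iidExpect_add {m : ℕ} (H G : (Fin m → α) → ℝ) :
    iidExpect p m (fun a => H a + G a) = iidExpect p m H + iidExpect p m G := by
  simp only [iidExpect, mul_add, sum_add_distrib]

theorem iidExpect_const_mul {m : ℕ} (c : ℝ) (H : (Fin m → α) → ℝ) :
    iidExpect p m (fun a => c * H a) = c * iidExpect p m H := by
  simp only [iidExpect, mul_sum, mul_left_comm]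

theorem iidExpect_sum {κ : Type*} (s : Finset κ) {m : ℕ} (H : κ → (Fin m → α) → ℝ) :
    iidExpect p m (fun a => ∑ k ∈ s, H k a) = ∑ k ∈ s, iidExpect p m (H k) := by
  simp only [iidExpect, mul_sum]
  exact sum_comm

theorem iidExpect_take (hp : ∑ i, p i = 1) {k m : ℕ} (hkm : k ≤ m) (H : (Fin k → α) → ℝ) :
    iidExpect p m (fun a => H (Fin.take k hkm a)) = iidExpect p k H := by
  induction m, hkm using Nat.le_induction with
  | base => simp [Fin.take_eq_self]
  | succ m hkm ih =>
    rw [iidExpect_succ, ← ih]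
    refine congrArg _ (funext fun b => ?_)
    simp_rw [← Fin.take_init _ hkm, Fin.init_snoc, ← sum_mul, hp, one_mul]

theorem iidExpect_drivenPath_succ_le (hp0 : ∀ i, 0 ≤ p i) (hp : ∑ i, p i = 1) {Z : Type*}
    {S : Set Z} {x₀ : Z} (hx₀ : x₀ ∈ S) {T : ℕ → Z → α → Z} (hT : ∀ k z i, z ∈ S → T k z i ∈ S)
    {V u : Z → ℝ} {k : ℕ} {b c e : ℝ}
    (hstep : ∀ z ∈ S, ∑ i, p i * V (T k z i) ≤ V z - c * (u z - b) + e) :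
    iidExpect p (k + 1) (fun a => V (drivenPath x₀ T (k + 1) a))
      ≤ iidExpect p k (fun a => V (drivenPath x₀ T k a))
        - c * (iidExpect p k (fun a => u (drivenPath x₀ T k a)) - b) + e := by
  rw [iidExpect_succ]
  simp only [drivenPath, Fin.init_snoc, Fin.snoc_last]
  calc _ ≤ iidExpect p k (fun a => (V (drivenPath x₀ T k a)
            + (-c) * u (drivenPath x₀ T k a)) + (c * b + e)) :=
        iidExpect_mono hp0 fun a => by
          linarith [hstep _ (drivenPath_mem hx₀ hT k a)]
    _ = _ := by
        rw [iidExpect_add, iidExpect_add, iidExpect_const_mul, iidExpect_const hp]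
        ring

theorem integral_comp_eq_iidExpect {Ω : Type*} [MeasurableSpace Ω] {μ : Measure Ω}
    [MeasurableSpace α] [MeasurableSingletonClass α] {ι : ℕ → Ω → α}
    (hmeas : ∀ k, Measurable (ι k)) (hindep : iIndepFun ι μ) (hp0 : ∀ i, 0 ≤ p i)
    (hdist : ∀ k i, μ {ω | ι k ω = i} = ENNReal.ofReal (p i)) (m : ℕ)
    (H : (Fin m → α) → ℝ) :
    ∫ ω, H (fun j => ι j ω) ∂μ = iidExpect p m H := by
  have := hindep.isProbabilityMeasure
  have hindep' : iIndepFun (fun j : Fin m => ι j) μ := hindep.precomp Fin.val_injective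
  have hlaw : μ.map (fun ω (j : Fin m) => ι j ω) = Measure.pi fun j : Fin m => μ.map (ι j) :=
    hindep'.map_fun_eq_pi_map fun j => (hmeas j).aemeasurable
  rw [← integral_map (φ := fun ω (j : Fin m) => ι j ω)
    (measurable_pi_lambda _ fun j : Fin m => hmeas j).aemeasurable
    (Measurable.of_discrete (f := H)).aestronglyMeasurable, hlaw,
    integral_fintype .of_finite]
  refine sum_congr rfl fun a _ => ?_
  rw [measureReal_def, Measure.pi_singleton, ENNReal.toReal_prod, smul_eq_mul]
  congr 1
  refine prod_congr rfl fun j _ => ?_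
  rw [Measure.map_apply (hmeas j) (measurableSet_singleton _)]
  simp [Set.preimage, hdist, hp0]

end IidExpect

theorem integral_comp_average_le_iidExpect {α Ω E : Type*} [Fintype α] [MeasurableSpace α]
    [MeasurableSingletonClass α] [MeasurableSpace Ω] {μ : Measure Ω} [AddCommGroup E]
    [Module ℝ E] {f : E → ℝ} (hf : ConvexOn ℝ Set.univ f) {p : α → ℝ} {ι : ℕ → Ω → α}
    (hmeas : ∀ k, Measurable (ι k)) (hindep : iIndepFun ι μ) (hp0 : ∀ i, 0 ≤ p i)
    (hp : ∑ i, p i = 1) (hdist : ∀ k i, μ {ω | ι k ω = i} = ENNReal.ofReal (p i))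
    {Φ : (k : ℕ) → (Fin k → α) → E} {x : ℕ → Ω → E} (hx : ∀ k ω, x k ω = Φ k fun j => ι j ω)
    {c : ℕ → ℝ} (hc : ∀ k, 0 ≤ c k) (N : ℕ) (hS : 0 < ∑ k ∈ range (N + 1), c k) :
    ∫ ω, f ((∑ k ∈ range (N + 1), c k)⁻¹ • ∑ k ∈ range (N + 1), c k • x k ω) ∂μ
      ≤ (∑ k ∈ range (N + 1), c k)⁻¹
        * ∑ k ∈ range (N + 1), c k * iidExpect p k (fun a => f (Φ k a)) := by
  set S := ∑ k ∈ range (N + 1), c k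
  have hw1 : ∑ k : Fin (N + 1), S⁻¹ * c k = 1 := by
    rw [← mul_sum, Fin.sum_univ_eq_sum_range c, inv_mul_cancel₀ hS.ne']
  have hprefix : ∀ ω, S⁻¹ • ∑ k ∈ range (N + 1), c k • x k ω
      = ∑ k : Fin (N + 1), (S⁻¹ * c k) • Φ k (Fin.take k k.is_le' fun j => ι j ω) := by
    intro ω
    simp_rw [smul_sum, smul_smul, ← Fin.sum_univ_eq_sum_range (fun k => (S⁻¹ * c k) • x k ω),
      hx]
    rfl
  calc ∫ ω, f (S⁻¹ • ∑ k ∈ range (N + 1), c k • x k ω) ∂μ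
      = iidExpect p (N + 1) fun a =>
          f (∑ k : Fin (N + 1), (S⁻¹ * c k) • Φ k (Fin.take k k.is_le' a)) := by
        simp_rw [hprefix]
        exact integral_comp_eq_iidExpect hmeas hindep hp0 hdist (N + 1) fun a =>
          f (∑ k : Fin (N + 1), (S⁻¹ * c k) • Φ k (Fin.take k k.is_le' a))
    _ ≤ iidExpect p (N + 1) fun a =>
          ∑ k : Fin (N + 1), (S⁻¹ * c k) * f (Φ k (Fin.take k k.is_le' a)) :=
        iidExpect_mono hp0 fun a =>
          hf.map_sum_le (fun k _ => mul_nonneg (inv_nonneg.2 hS.le) (hc k)) hw1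
            fun _ _ => Set.mem_univ _
    _ = S⁻¹ * ∑ k ∈ range (N + 1), c k * iidExpect p k (fun a => f (Φ k a)) := by
        rw [iidExpect_sum, mul_sum, ← Fin.sum_univ_eq_sum_range]
        refine sum_congr rfl fun k _ => ?_
        rw [iidExpect_const_mul, iidExpect_take hp k.is_le' fun a => f (Φ k a), mul_assoc]

theorem inv_sum_mul_sum_mul_sub_le {κ : Type*} {s : Finset κ} {c B : κ → ℝ} {b U : ℝ}
    (hS : 0 < ∑ k ∈ s, c k) (h : ∑ k ∈ s, c k * (B k - b) ≤ U) :
    (∑ k ∈ s, c k)⁻¹ * ∑ k ∈ s, c k * B k - b ≤ U / ∑ k ∈ s, c k := by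
  rw [le_div_iff₀ hS, sub_mul, mul_comm _ (∑ k ∈ s, c k), mul_inv_cancel_left₀ hS.ne']
  simp only [mul_sub, sum_sub_distrib, ← sum_mul] at h
  linarith

theorem sum_le_mul_add_sum_of_le_mul_sub {a b e w : ℕ → ℝ} {R : ℝ} (ha0 : ∀ k, 0 ≤ a k)
    (haR : ∀ k, a k ≤ R) (hw0 : ∀ k, 0 ≤ w k) (hw : Monotone w)
    (h : ∀ k, b k ≤ w k * (a k - a (k + 1)) + e k) (N : ℕ) :
    ∑ k ∈ range (N + 1), b k ≤ w N * R + ∑ k ∈ range (N + 1), e k := by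
  have htelescope : ∀ N, ∑ k ∈ range (N + 1), w k * (a k - a (k + 1))
      ≤ w N * R - w N * a (N + 1) := by
    intro N
    induction N with
    | zero => simp only [zero_add, sum_range_one]; nlinarith [haR 0, hw0 0]
    | succ N ih =>
      rw [sum_range_succ]
      nlinarith [mul_nonneg (sub_nonneg.2 (hw N.le_succ)) (sub_nonneg.2 (haR (N + 1)))]
  calc ∑ k ∈ range (N + 1), b k
      ≤ ∑ k ∈ range (N + 1), (w k * (a k - a (k + 1)) + e k) := sum_le_sum fun k _ => h k
    _ ≤ w N * R + ∑ k ∈ range (N + 1), e k := by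
        rw [sum_add_distrib]
        nlinarith [htelescope N, mul_nonneg (hw0 N) (ha0 (N + 1))]

theorem rpow_mul_le_of_le_sub {γ η r a a' b C : ℝ} (hγ : 0 < γ) (hη : 0 < η)
    (h : a' ≤ a - 2 * γ * η * b + 2 * γ ^ 2 * C) :
    γ ^ r * b ≤ γ ^ (r - 1) / (2 * η) * (a - a') + η⁻¹ * γ ^ (r + 1) * C := by
  have ht : 0 < γ ^ (r - 1) := Real.rpow_pos_of_pos hγ _
  have hr : γ ^ r = γ ^ (r - 1) * γ := by
    rw [← Real.rpow_add_one hγ.ne']; ring_nf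
  have hr' : γ ^ (r + 1) = γ ^ (r - 1) * γ ^ 2 := by
    rw [← Real.rpow_natCast, ← Real.rpow_add hγ]; ring_nf
  rw [hr, hr']
  have := mul_le_mul_of_nonneg_left (sub_nonneg.2 h)
    (div_nonneg ht.le (by positivity : 0 ≤ 2 * η))
  field_simp
  field_simp at this
  nlinarith

theorem integral_average_sub_le_of_expected_descent {α Ω Z : Type*} [Fintype α]
    [MeasurableSpace α] [MeasurableSingletonClass α] [MeasurableSpace Ω] {μ : Measure Ω}
    [AddCommGroup Z] [Module ℝ Z] {p : α → ℝ} (hp0 : ∀ i, 0 ≤ p i) (hp : ∑ i, p i = 1)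
    {ι : ℕ → Ω → α} (hmeas : ∀ k, Measurable (ι k)) (hindep : iIndepFun ι μ)
    (hdist : ∀ k i, μ {ω | ι k ω = i} = ENNReal.ofReal (p i))
    {S : Set Z} {x₀ : Z} (hx₀ : x₀ ∈ S) {T : ℕ → Z → α → Z} (hT : ∀ k z i, z ∈ S → T k z i ∈ S)
    {x : ℕ → Ω → Z} (hx0 : ∀ ω, x 0 ω = x₀) (hx : ∀ k ω, x (k + 1) ω = T k (x k ω) (ι k ω))
    {f V : Z → ℝ} (hf : ConvexOn ℝ Set.univ f) {R fstar : ℝ}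
    (hV0 : ∀ z ∈ S, 0 ≤ V z) (hVR : ∀ z ∈ S, V z ≤ R)
    {γ η e : ℕ → ℝ} (hγ : ∀ k, 0 < γ k) (hη : ∀ k, 0 < η k)
    (hγmono : ∀ k, γ (k + 1) ≤ γ k) (hηmono : ∀ k, η (k + 1) ≤ η k) {r : ℝ} (hr : r ≤ 1)
    (hdescent : ∀ k, ∀ z ∈ S, ∑ i, p i * V (T k z i)
      ≤ V z - 2 * γ k * η k * (f z - fstar) + 2 * γ k ^ 2 * e k) (N : ℕ) :
    ∫ ω, f ((∑ k ∈ range (N + 1), γ k ^ r)⁻¹ • ∑ k ∈ range (N + 1), γ k ^ r • x k ω) ∂μ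
        - fstar
      ≤ (γ N ^ (r - 1) / (2 * η N) * R + ∑ k ∈ range (N + 1), (η k)⁻¹ * γ k ^ (r + 1) * e k)
        / ∑ k ∈ range (N + 1), γ k ^ r := by
  let A : ℕ → ℝ := fun k => iidExpect p k fun a => V (drivenPath x₀ T k a)
  let B : ℕ → ℝ := fun k => iidExpect p k fun a => f (drivenPath x₀ T k a)
  have hA : ∀ k, A (k + 1) ≤ A k - 2 * γ k * η k * (B k - fstar) + 2 * γ k ^ 2 * e k :=
    fun k => iidExpect_drivenPath_succ_le hp0 hp hx₀ hT (V := V) (u := f) (hdescent k)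
  have hA0 : ∀ k, 0 ≤ A k := fun k =>
    le_iidExpect_of_le hp0 hp fun a => hV0 _ (drivenPath_mem hx₀ hT k a)
  have hAR : ∀ k, A k ≤ R := fun k =>
    iidExpect_le_of_le hp0 hp fun a => hVR _ (drivenPath_mem hx₀ hT k a)
  have hw : Monotone fun k => γ k ^ (r - 1) / (2 * η k) := monotone_nat_of_le_succ fun k =>
    div_le_div₀ (Real.rpow_pos_of_pos (hγ (k + 1)) _).le
      (Real.rpow_le_rpow_of_nonpos (hγ (k + 1)) (hγmono k) (by linarith))
      (by linarith [hη (k + 1)]) (by linarith [hηmono k])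
  have hsum := sum_le_mul_add_sum_of_le_mul_sub hA0 hAR
    (fun k => div_nonneg (Real.rpow_pos_of_pos (hγ k) _).le (by linarith [hη k])) hw
    (fun k => rpow_mul_le_of_le_sub (hγ k) (hη k) (hA k)) N
  have hS : 0 < ∑ k ∈ range (N + 1), γ k ^ r :=
    sum_pos (fun k _ => Real.rpow_pos_of_pos (hγ k) r) nonempty_range_add_one
  have hjensen := integral_comp_average_le_iidExpect hf hmeas hindep hp0 hp hdist
    (fun k ω => eq_drivenPath hx0 hx ω k) (fun k => (Real.rpow_pos_of_pos (hγ k) r).le) N hS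
  exact (sub_le_sub_right hjensen fstar).trans (inv_sum_mul_sum_mul_sub_le hS hsum)

theorem aRBIRG_suboptimality_bound_general {d : ℕ} {n : Fin d → ℕ}
    {Ω : Type*} [MeasurableSpace Ω] (μ : Measure Ω)
    (Xs : ∀ i, Set (EuclideanSpace ℝ (Fin (n i))))
    (hXcv : ∀ i, Convex ℝ (Xs i))
    (X : Set (BlockSpace d n)) (hX : X = {x | ∀ i, x i ∈ Xs i})
    (M : ℝ) (hM : ∀ x ∈ X, ‖x‖ ≤ M)
    (f : BlockSpace d n → ℝ) (hf : ConvexOn ℝ Set.univ f)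
    (g : BlockSpace d n → BlockSpace d n)
    (hsubgrad : ∀ x ∈ X, ∀ y : BlockSpace d n, f x + ⟪g x, y - x⟫ ≤ f y)
    (Cf : ℝ) (hCf : ∀ x ∈ X, ‖g x‖ ≤ Cf)
    (F : BlockSpace d n → BlockSpace d n)
    (hmono : ∀ x ∈ X, ∀ y ∈ X, 0 ≤ ⟪F x - F y, x - y⟫)
    (CF : ℝ) (hCF : ∀ x ∈ X, ‖F x‖ ≤ CF)
    (p : Fin d → ℝ) (hp : ∀ i, 0 < p i) (hpsum : ∑ i, p i = 1)
    (pmin : ℝ) (hpmin : IsLeast (Set.range p) pmin)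
    (ι : ℕ → Ω → Fin d) (hιmeas : ∀ k, Measurable (ι k))
    (hindep : iIndepFun ι μ)
    (hdist : ∀ k i, μ {ω | ι k ω = i} = ENNReal.ofReal (p i))
    (γ η : ℕ → ℝ) (hγpos : ∀ k, 0 < γ k) (hηpos : ∀ k, 0 < η k)
    (hγmono : ∀ k, γ (k + 1) ≤ γ k) (hηmono : ∀ k, η (k + 1) ≤ η k)
    (r : ℝ) (hr1 : r < 1)
    (proj : ∀ i, EuclideanSpace ℝ (Fin (n i)) → EuclideanSpace ℝ (Fin (n i)))
    (hproj : ∀ i z, proj i z ∈ Xs i ∧ ∀ w ∈ Xs i, ‖z - proj i z‖ ≤ ‖z - w‖)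
    (x0 : BlockSpace d n) (hx0X : x0 ∈ X)
    (x : ℕ → Ω → BlockSpace d n)
    (hx0 : ∀ ω, x 0 ω = x0)
    (hxrec : ∀ k ω,
      (x (k + 1) ω) (ι k ω) = proj (ι k ω) ((x k ω) (ι k ω)
        - γ k • (F (x k ω) (ι k ω) + η k • g (x k ω) (ι k ω)))
      ∧ ∀ j, j ≠ ι k ω → x (k + 1) ω j = x k ω j)
    (xstar : BlockSpace d n)
    (hxstar : xstar ∈ VISol X F ∧ ∀ y ∈ VISol X F, f xstar ≤ f y)
    (N : ℕ) :
    (∫ ω, f ((∑ k ∈ Finset.range (N + 1), γ k ^ r)⁻¹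
        • ∑ k ∈ Finset.range (N + 1), γ k ^ r • x k ω) ∂μ) - f xstar
      ≤ (4 * M ^ 2 * γ N ^ (r - 1) / η N
          + ∑ k ∈ Finset.range (N + 1), (η k)⁻¹ * γ k ^ (r + 1) * (CF ^ 2 + η k ^ 2 * Cf ^ 2))
        / (pmin * ∑ k ∈ Finset.range (N + 1), γ k ^ r) := by
  obtain ⟨i₀, rfl⟩ := hpmin.1
  have hpmin_le : ∀ i, p i₀ ≤ p i := fun i => hpmin.2 ⟨i, rfl⟩
  have hpmin_le_one : p i₀ ≤ 1 := hpsum ▸ single_le_sum (fun i _ => (hp i).le) (mem_univ i₀)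
  obtain ⟨⟨hxstarX, hsol⟩, -⟩ := hxstar
  have hmemX : ∀ z, z ∈ X ↔ ∀ i, z i ∈ Xs i := fun z => by rw [hX]; rfl
  let T : ℕ → BlockSpace d n → Fin d → BlockSpace d n :=
    fun k z => blockProjStep proj (γ k) (F z + η k • g z) z
  have hTX : ∀ k z i, z ∈ X → T k z i ∈ X := fun k z i hz =>
    (hmemX _).2 (blockProjStep_mem (fun i v => (hproj i v).1) _ _ ((hmemX z).1 hz) i)
  have hstep : ∀ k ω, x (k + 1) ω = T k (x k ω) (ι k ω) := fun k ω =>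
    eq_blockProjStep (by rw [(hxrec k ω).1, PiLp.add_apply, PiLp.smul_apply]) (hxrec k ω).2
  have key := integral_average_sub_le_of_expected_descent (fun i => (hp i).le) hpsum hιmeas
    hindep hdist hx0X hTX hx0 hstep hf (V := fun z => weightedSqDist p z xstar)
    (fun z _ => weightedSqDist_nonneg (fun i => (hp i).le) z xstar)
    (fun z hz => weightedSqDist_le_of_norm_le (hp i₀) hpmin_le (hM z hz) (hM xstar hxstarX))
    hγpos hηpos hγmono hηmono hr1.le
    (fun k z hz => sum_mul_weightedSqDist_regularized_blockProjStep_le hXcv hproj hp hpsum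
      ((hmemX _).1 hxstarX) (hγpos k).le (hηpos k).le (hmono z hz xstar hxstarX) (hsol z hz)
      (hsubgrad z hz xstar) (hCF z hz) (hCf z hz)) N
  set noise := ∑ k ∈ range (N + 1), (η k)⁻¹ * γ k ^ (r + 1) * (CF ^ 2 + η k ^ 2 * Cf ^ 2)
  have hnoise : 0 ≤ noise := sum_nonneg fun k _ => by
    have := hηpos k; have := Real.rpow_pos_of_pos (hγpos k) (r + 1); positivity
  have hlead : 0 ≤ 4 * M ^ 2 * γ N ^ (r - 1) / η N / p i₀ := by
    have := hηpos N; have := Real.rpow_pos_of_pos (hγpos N) (r - 1); have := hp i₀; positivity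
  -- `key` is sharper than the claim by a factor 2 in its leading term; also `p_min ≤ 1`.
  have hconst : γ N ^ (r - 1) / (2 * η N) * (4 * M ^ 2 / p i₀) + noise
      ≤ (4 * M ^ 2 * γ N ^ (r - 1) / η N + noise) / p i₀ := by
    rw [add_div]
    gcongr ?_ + ?_
    · calc _ = 4 * M ^ 2 * γ N ^ (r - 1) / η N / p i₀ / 2 := by ring
        _ ≤ _ := half_le_self hlead
    · exact le_div_self hnoise (hp i₀) hpmin_le_one
  calc _ ≤ _ := key
    _ ≤ (4 * M ^ 2 * γ N ^ (r - 1) / η N + noise) / p i₀ / ∑ k ∈ range (N + 1), γ k ^ r :=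
        div_le_div_of_nonneg_right hconst
          (sum_nonneg fun k _ => (Real.rpow_pos_of_pos (hγpos k) r).le)
    _ = _ := div_div _ _ _

/-- Suboptimality bound for the aRB-IRG algorithm (Proposition 3.2(a)):
for nonincreasing positive stepsizes `γ` and regularization parameters `η`, bounded `X`,
bounded subgradients and mapping, and an optimal solution `x*` of
`min{f(x) : x ∈ SOL(X,F)}`, one has for every `N ≥ 1`
`E[f(x̄_N)] − f(x*) ≤ (4M²γ_N^{r−1}/η_N + Σ_{k=0}^N η_k⁻¹ γ_k^{r+1}(C_F² + η_k²C_f²))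
  / (p_min Σ_{k=0}^N γ_k^r)`. -/
theorem aRBIRG_suboptimality_bound {d : ℕ} {n : Fin d → ℕ}
    {Ω : Type*} [MeasurableSpace Ω] (μ : Measure Ω) [IsProbabilityMeasure μ]
    [MeasurableSpace (BlockSpace d n)] [BorelSpace (BlockSpace d n)]
    (Xs : ∀ i, Set (EuclideanSpace ℝ (Fin (n i))))
    (hXne : ∀ i, (Xs i).Nonempty) (hXcl : ∀ i, IsClosed (Xs i)) (hXcv : ∀ i, Convex ℝ (Xs i))
    (X : Set (BlockSpace d n)) (hX : X = {x | ∀ i, x i ∈ Xs i})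
    (M : ℝ) (hM : ∀ x ∈ X, ‖x‖ ≤ M)
    (f : BlockSpace d n → ℝ) (hf : ConvexOn ℝ Set.univ f)
    (g : BlockSpace d n → BlockSpace d n)
    (hsubgrad : ∀ x ∈ X, ∀ y : BlockSpace d n, f x + ⟪g x, y - x⟫ ≤ f y)
    (Cf : ℝ) (hCf : ∀ x ∈ X, ‖g x‖ ≤ Cf)
    (F : BlockSpace d n → BlockSpace d n) (hFcont : Continuous F)
    (hmono : ∀ x ∈ X, ∀ y ∈ X, 0 ≤ ⟪F x - F y, x - y⟫)
    (CF : ℝ) (hCF : ∀ x ∈ X, ‖F x‖ ≤ CF)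
    (p : Fin d → ℝ) (hp : ∀ i, 0 < p i) (hpsum : ∑ i, p i = 1)
    (pmin : ℝ) (hpmin : IsLeast (Set.range p) pmin)
    (ι : ℕ → Ω → Fin d) (hιmeas : ∀ k, Measurable (ι k))
    (hindep : iIndepFun ι μ)
    (hdist : ∀ k i, μ {ω | ι k ω = i} = ENNReal.ofReal (p i))
    (γ η : ℕ → ℝ) (hγpos : ∀ k, 0 < γ k) (hηpos : ∀ k, 0 < η k)
    (hγmono : ∀ k, γ (k + 1) ≤ γ k) (hηmono : ∀ k, η (k + 1) ≤ η k)
    (r : ℝ) (hr0 : 0 ≤ r) (hr1 : r < 1)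
    (proj : ∀ i, EuclideanSpace ℝ (Fin (n i)) → EuclideanSpace ℝ (Fin (n i)))
    (hproj : ∀ i z, proj i z ∈ Xs i ∧ ∀ w ∈ Xs i, ‖z - proj i z‖ ≤ ‖z - w‖)
    (x0 : BlockSpace d n) (hx0X : x0 ∈ X)
    (x : ℕ → Ω → BlockSpace d n) (hxmeas : ∀ k, Measurable (x k))
    (hx0 : ∀ ω, x 0 ω = x0)
    (hxrec : ∀ k ω,
      (x (k + 1) ω) (ι k ω) = proj (ι k ω) ((x k ω) (ι k ω)
        - γ k • (F (x k ω) (ι k ω) + η k • g (x k ω) (ι k ω)))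
      ∧ ∀ j, j ≠ ι k ω → x (k + 1) ω j = x k ω j)
    (xstar : BlockSpace d n)
    (hxstar : xstar ∈ VISol X F ∧ ∀ y ∈ VISol X F, f xstar ≤ f y)
    (N : ℕ) (hN : 1 ≤ N) :
    (∫ ω, f ((∑ k ∈ Finset.range (N + 1), γ k ^ r)⁻¹
        • ∑ k ∈ Finset.range (N + 1), γ k ^ r • x k ω) ∂μ) - f xstar
      ≤ (4 * M ^ 2 * γ N ^ (r - 1) / η N
          + ∑ k ∈ Finset.range (N + 1), (η k)⁻¹ * γ k ^ (r + 1) * (CF ^ 2 + η k ^ 2 * Cf ^ 2))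
        / (pmin * ∑ k ∈ Finset.range (N + 1), γ k ^ r) :=
  aRBIRG_suboptimality_bound_general μ Xs hXcv X hX M hM f hf g hsubgrad Cf hCf F hmono CF hCF p hp
    hpsum pmin hpmin ι hιmeas hindep hdist γ η hγpos hηpos hγmono hηmono r hr1 proj hproj x0 hx0X x
    hx0 hxrec xstar hxstar N
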